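/- Let G be a finite simple graph, M* a maximum matching and M a matching in G. Consider the graph G' on V(G) with edge set M* △ M. Every connected component of G' that is a path with an odd number of edges is an augmenting path with respect to M, and the number of such odd-length path components is at least |M*| − |M|. -/

import Mathlib

/-- A matching in a graph `G`: a finite set of edges of `G` that are pairwise
vertex-disjoint. -/
def IsMatching {V : Type*} (G : SimpleGraph V) (M : Finset (Sym2 V)) : Prop :=
  (∀ e ∈ M, e ∈ G.edgeSet) ∧
  ∀ e ∈ M, ∀ f ∈ M, e ≠ f → ∀ v : V, v ∈ e → v ∉ f

/-- The list of consecutive edges of a list of vertices. -/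
def pathEdges {V : Type*} (vs : List V) : List (Sym2 V) :=
  (vs.zip vs.tail).map fun p => s(p.1, p.2)

/-- A vertex unmatched by `M`. -/
def Unmatched {V : Type*} (M : Finset (Sym2 V)) (x : V) : Prop := ∀ e ∈ M, x ∉ e

/-- An augmenting path with respect to a matching `M`: a path
`v₀, v₁, …, v_{2ℓ+1}` in `G` whose edges alternate between non-matching edges
(at even positions) and matching edges (at odd positions), and whose two
endpoints are unmatched by `M`. -/
def IsAugPath {V : Type*} (G : SimpleGraph V) (M : Finset (Sym2 V)) (vs : List V) : Prop :=
  2 ≤ vs.length ∧ vs.Nodup ∧ Even vs.length ∧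
  (∀ e ∈ pathEdges vs, e ∈ G.edgeSet) ∧
  (∀ (i : ℕ) (h : i < (pathEdges vs).length), ((pathEdges vs).get ⟨i, h⟩ ∈ M ↔ Odd i)) ∧
  (∀ x ∈ vs.head?, Unmatched M x) ∧ (∀ x ∈ vs.getLast?, Unmatched M x)

/-- `vs` lists the vertices of a connected component of `H` that is a path with
an odd number of edges (equivalently, an even number of vertices). -/
def IsOddPathComponent {V : Type*} [DecidableEq V] (H : SimpleGraph V) (vs : List V) : Prop :=
  2 ≤ vs.length ∧ Even vs.length ∧ vs.Nodup ∧
  List.Chain' H.Adj vs ∧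
  (∀ u ∈ vs, ∀ w, H.Adj u w → w ∈ vs) ∧
  (∀ u ∈ vs, ∀ w ∈ vs, H.Adj u w → s(u, w) ∈ pathEdges vs)




set_option linter.unusedSectionVars false
section Aux
variable {V : Type*} [DecidableEq V]

/-- abstract matching: nondiagonal, pairwise disjoint edges -/
def MProps (A : Finset (Sym2 V)) : Prop :=
  (∀ e ∈ A, ¬ e.IsDiag) ∧ ∀ e ∈ A, ∀ f ∈ A, e ≠ f → ∀ v : V, v ∈ e → v ∉ f

lemma MProps.mono {A B : Finset (Sym2 V)} (h : MProps B) (hs : A ⊆ B) : MProps A :=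
  ⟨fun e he => h.1 e (hs he), fun e he f hf => h.2 e (hs he) f (hs hf)⟩

lemma MProps.eq_of_shared {A : Finset (Sym2 V)} (h : MProps A) {e f : Sym2 V}
    (he : e ∈ A) (hf : f ∈ A) {v : V} (hve : v ∈ e) (hvf : v ∈ f) : e = f := by
  by_contra hne
  exact h.2 e he f hf hne v hve hvf

open Classical in
noncomputable def partner (A : Finset (Sym2 V)) (v : V) : Option V :=
  if h : ∃ w, s(v, w) ∈ A then some h.choose else none

lemma partner_eq_some {A : Finset (Sym2 V)} (h : MProps A) {v w : V}
    (hvw : s(v, w) ∈ A) : partner A v = some w := by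
  have hex : ∃ w, s(v, w) ∈ A := ⟨w, hvw⟩
  rw [partner]; rw [dif_pos hex]
  have h2 := hex.choose_spec
  have := h.eq_of_shared h2 hvw (Sym2.mem_mk_left _ _) (Sym2.mem_mk_left _ _)
  rcases Sym2.eq_iff.mp this with ⟨-, h3⟩ | ⟨h3, h4⟩
  · rw [h3]
  · exfalso; exact h.1 _ hvw (by rw [← h3]; exact Sym2.mk_isDiag_iff.mpr rfl)

lemma partner_eq_none {A : Finset (Sym2 V)} {v : V}
    (h : ∀ w, s(v, w) ∉ A) : partner A v = none := by
  rw [partner, dif_neg]; push_neg; exact h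

lemma partner_spec {A : Finset (Sym2 V)} {v w : V}
    (h : partner A v = some w) : s(v, w) ∈ A := by
  rw [partner] at h
  split_ifs at h with hex
  cases h
  exact hex.choose_spec

lemma partner_ne {A : Finset (Sym2 V)} (hA : MProps A) {v w : V}
    (h : partner A v = some w) : v ≠ w := by
  intro rfl'
  exact hA.1 _ (partner_spec h) (by subst rfl'; exact Sym2.mk_isDiag_iff.mpr rfl)

lemma partner_symm {A : Finset (Sym2 V)} (hA : MProps A) {v w : V}
    (h : partner A v = some w) : partner A w = some v :=
  partner_eq_some hA (by rw [Sym2.eq_swap]; exact partner_spec h)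

lemma partner_none_iff {A : Finset (Sym2 V)} {v : V} :
    partner A v = none ↔ ∀ w, s(v, w) ∉ A := by
  constructor
  · intro h w hw
    rw [partner, dif_pos ⟨w, hw⟩] at h
    cases h
  · exact partner_eq_none

lemma partner_isSome_iff {A : Finset (Sym2 V)} (hA : MProps A) {v : V} :
    (partner A v).isSome ↔ ∃ e ∈ A, v ∈ e := by
  constructor
  · intro h
    obtain ⟨w, hw⟩ := Option.isSome_iff_exists.mp h
    exact ⟨s(v, w), partner_spec hw, Sym2.mem_mk_left _ _⟩
  · rintro ⟨e, he, hv⟩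
    obtain ⟨w, rfl⟩ := Sym2.mem_iff_exists.mp hv
    rw [partner_eq_some hA he]; rfl

end Aux


set_option linter.unusedSectionVars false
section PE
variable {V : Type*} [DecidableEq V]

lemma pathEdges_length (vs : List V) : (pathEdges vs).length = vs.length - 1 := by
  simp [pathEdges, List.length_zip]

lemma pathEdges_get (vs : List V) (i : ℕ) (h : i < (pathEdges vs).length) :
    (pathEdges vs).get ⟨i, h⟩ =
      s(vs.get ⟨i, by rw [pathEdges_length] at h; omega⟩,
        vs.get ⟨i + 1, by rw [pathEdges_length] at h; omega⟩) := by
  simp only [pathEdges, List.get_eq_getElem, List.getElem_map, List.getElem_zip]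
  rw [List.getElem_tail]

lemma pathEdges_getElem (vs : List V) (i : ℕ) (h : i < (pathEdges vs).length)
    (h1 : i < vs.length) (h2 : i + 1 < vs.length) :
    (pathEdges vs)[i] = s(vs[i], vs[i+1]) := by
  have := pathEdges_get vs i h
  simpa using this

lemma pathEdges_mem_iff {vs : List V} {e : Sym2 V} :
    e ∈ pathEdges vs ↔ ∃ (i : ℕ) (h : i + 1 < vs.length),
      e = s(vs[i], vs[i+1]) := by
  rw [List.mem_iff_getElem]
  constructor
  · rintro ⟨i, h, rfl⟩
    have hl := pathEdges_length vs
    refine ⟨i, by omega, ?_⟩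
    rw [pathEdges_getElem vs i h (by omega) (by omega)]
  · rintro ⟨i, h, rfl⟩
    have hl := pathEdges_length vs
    exact ⟨i, by omega, pathEdges_getElem vs i (by omega) (by omega) (by omega)⟩

end PE
section PE2
variable {V : Type*} [DecidableEq V]
lemma nodup_getElem_inj {l : List V} (h : l.Nodup) {i j : ℕ} (hi : i < l.length)
    (hj : j < l.length) (he : l[i] = l[j]) : i = j :=
  (List.Nodup.getElem_inj_iff h).mp he

lemma pathEdges_vertex_mem {vs : List V} {e : Sym2 V} (he : e ∈ pathEdges vs)
    {x : V} (hx : x ∈ e) : x ∈ vs := by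
  obtain ⟨i, h, rfl⟩ := pathEdges_mem_iff.mp he
  rcases Sym2.mem_iff.mp hx with rfl | rfl
  · exact List.getElem_mem _
  · exact List.getElem_mem _

lemma pathEdges_nodup {vs : List V} (h : vs.Nodup) : (pathEdges vs).Nodup := by
  rw [List.nodup_iff_injective_get]
  rintro ⟨i, hi⟩ ⟨j, hj⟩ hij
  have hl := pathEdges_length vs
  rw [pathEdges_get vs i hi, pathEdges_get vs j hj] at hij
  simp only [List.get_eq_getElem] at hij
  rcases Sym2.eq_iff.mp hij with ⟨h1, h2⟩ | ⟨h1, h2⟩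
  · exact Fin.ext (nodup_getElem_inj h _ _ h1)
  · have e1 : i = j + 1 := nodup_getElem_inj h (by omega) (by omega) h1
    have e2 : i + 1 = j := nodup_getElem_inj h (by omega) (by omega) h2
    omega

/-- two distinct path edges sharing a vertex are consecutive, in either order -/
lemma pathEdges_shared {vs : List V} (h : vs.Nodup) {i j : ℕ}
    (hi : i + 1 < vs.length) (hj : j + 1 < vs.length) (hne : i ≠ j) {x : V}
    (hxi : x ∈ s(vs[i], vs[i+1])) (hxj : x ∈ s(vs[j], vs[j+1])) :
    j = i + 1 ∨ i = j + 1 := by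
  rcases Sym2.mem_iff.mp hxi with rfl | h1 <;> rcases Sym2.mem_iff.mp hxj with h2 | h2
  · exact absurd (nodup_getElem_inj h (by omega) (by omega) h2) hne
  · right; exact nodup_getElem_inj h (by omega) (by omega) h2
  · left; exact (nodup_getElem_inj h (by omega) (by omega) (h1.symm.trans h2)).symm
  · exact absurd (Nat.succ_injective (nodup_getElem_inj h (by omega) (by omega) (h1.symm.trans h2))) hne
end PE2

lemma filter_alt_aux {α : Type*} : ∀ (l : List α) (p : α → Bool) (b : Bool),
    (∀ (i : ℕ) (h : i < l.length), p l[i] = true ↔ (if b then Even i else Odd i)) →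
    (l.filter p).length = (if b then (l.length + 1) / 2 else l.length / 2)
  | [], p, b, _ => by cases b <;> simp
  | a :: t, p, b, h => by
    have h0 := h 0 (by simp)
    simp only [List.getElem_cons_zero] at h0
    have ht := filter_alt_aux t p (!b) (by
      intro i hi
      have := h (i + 1) (by simpa using Nat.succ_lt_succ hi)
      simp only [List.getElem_cons_succ] at this
      rw [this]
      cases b <;> simp [Nat.even_add_one, Nat.odd_add_one])
    cases b
    · simp only [Bool.false_eq_true, if_false, Nat.odd_iff] at h0
      have ha : p a = false := by
        cases hc : p a
        · rfl
        · exact absurd (h0.mp hc) (by norm_num)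
      simp only [List.filter_cons, ha, Bool.false_eq_true, if_false]
      simp only [Bool.not_false, if_true] at ht
      rw [ht]
      simp only [List.length_cons, Bool.false_eq_true, if_false]
    · simp only [if_true] at h0
      have ha : p a = true := h0.mpr Even.zero
      simp only [List.filter_cons, ha, if_true, List.length_cons]
      simp only [Bool.not_true, Bool.false_eq_true, if_false] at ht
      rw [ht]
      omega

lemma pathEdges_cons_cons {V : Type*} {a b : V} {l : List V} :
    pathEdges (a :: b :: l) = s(a, b) :: pathEdges (b :: l) := rfl


set_option linter.unusedSectionVars false
section WalkDev
variable {V : Type*} [DecidableEq V]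


noncomputable def walk (A B : Finset (Sym2 V)) : ℕ → V → List V
  | 0, v => [v]
  | n+1, v =>
    match partner A v with
    | none => [v]
    | some w => v :: walk B A n w

lemma walk_zero {A B : Finset (Sym2 V)} {v : V} : walk A B 0 v = [v] := rfl

lemma walk_succ_none {A B : Finset (Sym2 V)} {v : V} {n : ℕ} (h : partner A v = none) :
    walk A B (n+1) v = [v] := by simp [walk, h]

lemma walk_succ_some {A B : Finset (Sym2 V)} {v w : V} {n : ℕ} (h : partner A v = some w) :
    walk A B (n+1) v = v :: walk B A n w := by simp [walk, h]

lemma walk_exists_cons (A B : Finset (Sym2 V)) (n : ℕ) (v : V) :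
    ∃ t, walk A B n v = v :: t := by
  cases n with
  | zero => exact ⟨[], rfl⟩
  | succ m =>
    cases h : partner A v with
    | none => exact ⟨[], walk_succ_none h⟩
    | some w => exact ⟨walk B A m w, walk_succ_some h⟩

lemma walk_ne_nil (A B : Finset (Sym2 V)) (n : ℕ) (v : V) : walk A B n v ≠ [] := by
  obtain ⟨t, ht⟩ := walk_exists_cons A B n v
  simp [ht]

lemma mem_walk_self (A B : Finset (Sym2 V)) (n : ℕ) (v : V) : v ∈ walk A B n v := by
  obtain ⟨t, ht⟩ := walk_exists_cons A B n v
  simp [ht]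

/-- every non-head element of a walk has a partner -/
lemma walk_mem_partner {A B : Finset (Sym2 V)} (hA : MProps A) (hB : MProps B) :
    ∀ (n : ℕ) (v : V), ∀ x ∈ walk A B n v,
      x = v ∨ (partner A x).isSome ∨ (partner B x).isSome
  | 0, v, x, hx => by
    rw [walk_zero] at hx
    simp at hx
    exact Or.inl hx
  | n+1, v, x, hx => by
    cases h : partner A v with
    | none =>
      rw [walk_succ_none h] at hx
      simp at hx
      exact Or.inl hx
    | some w =>
      rw [walk_succ_some h] at hx
      rcases List.mem_cons.mp hx with rfl | hx'
      · exact Or.inl rfl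
      · rcases walk_mem_partner hB hA n w x hx' with rfl | hp | hp
        · exact Or.inr (Or.inl (by rw [partner_symm hA h]; rfl))
        · exact Or.inr (Or.inr hp)
        · exact Or.inr (Or.inl hp)

lemma walk_congr : ∀ (n : ℕ) (A B A' B' : Finset (Sym2 V)) (u : V),
    (∀ x ∈ walk A' B' n u, partner A x = partner A' x ∧ partner B x = partner B' x) →
    walk A B n u = walk A' B' n u
  | 0, A, B, A', B', u, _ => rfl
  | n+1, A, B, A', B', u, h => by
    have hu := h u (mem_walk_self A' B' (n+1) u)
    cases h' : partner A' u with
    | none =>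
      rw [walk_succ_none h', walk_succ_none (by rw [hu.1, h'])]
    | some w =>
      rw [walk_succ_some h'] at h ⊢
      rw [walk_succ_some (by rw [hu.1, h'] : partner A u = some w)]
      congr 1
      exact walk_congr n B A B' A' w (fun x hx =>
        ⟨(h x (List.mem_cons_of_mem _ hx)).2, (h x (List.mem_cons_of_mem _ hx)).1⟩)

lemma partner_erase {A : Finset (Sym2 V)} (hA : MProps A) {v w x : V}
    (hx : x ≠ v) (hx' : x ≠ w) :
    partner (A.erase s(v, w)) x = partner A x := by
  have hsub : A.erase s(v, w) ⊆ A := Finset.erase_subset _ _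
  cases h : partner A x with
  | none =>
    refine partner_eq_none fun z hz => ?_
    rw [partner_none_iff] at h
    exact h z (hsub hz)
  | some z =>
    refine partner_eq_some (hA.mono hsub) (Finset.mem_erase.mpr ⟨?_, partner_spec h⟩)
    intro hc
    rcases Sym2.eq_iff.mp hc with ⟨h1, -⟩ | ⟨h1, -⟩
    · exact hx h1
    · exact hx' h1

/-- the master lemma : nodup, closure, and interior structure of maximal alternating walks -/
lemma walk_master : ∀ (n : ℕ) (A B : Finset (Sym2 V)) (v : V),
    MProps A → MProps B → partner B v = none →
    (walk A B n v).Nodup ∧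
    ((walk A B n v).length ≤ n →
      (∀ x ∈ walk A B n v, ∀ y : V, (partner A x = some y ∨ partner B x = some y) →
        s(x, y) ∈ pathEdges (walk A B n v)) ∧
      (∀ x ∈ walk A B n v, (partner A x = none ∨ partner B x = none) →
        x = v ∨ (walk A B n v).getLast? = some x))
  | 0, A, B, v, hA, hB, hv => by
    refine ⟨by simp [walk_zero], fun hlen => ?_⟩
    rw [walk_zero] at hlen
    simp at hlen
  | n+1, A, B, v, hA, hB, hv => by
    cases hpv : partner A v with
    | none =>
      rw [walk_succ_none hpv]
      refine ⟨by simp, fun _ => ⟨?_, ?_⟩⟩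
      · rintro x hx y hy
        simp only [List.mem_singleton] at hx
        subst hx
        rcases hy with hy | hy
        · rw [hpv] at hy; cases hy
        · rw [hv] at hy; cases hy
      · rintro x hx -
        simp at hx
        exact Or.inl hx
    | some w =>
      rw [walk_succ_some hpv]
      have hvw : v ≠ w := partner_ne hA hpv
      have hvwA : s(v, w) ∈ A := partner_spec hpv
      set A' := A.erase s(v, w) with hA'def
      have hsub : A' ⊆ A := Finset.erase_subset _ _
      have hA' : MProps A' := hA.mono hsub
      have hA'w : partner A' w = none := by
        refine partner_eq_none fun z hz => ?_
        have := hA.eq_of_shared (hsub hz) hvwA (Sym2.mem_mk_left _ _) (Sym2.mem_mk_right _ _)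
        exact (Finset.mem_erase.mp hz).1 this
      have hA'v : partner A' v = none := by
        refine partner_eq_none fun z hz => ?_
        have := hA.eq_of_shared (hsub hz) hvwA (Sym2.mem_mk_left _ _) (Sym2.mem_mk_left _ _)
        exact (Finset.mem_erase.mp hz).1 this
      obtain ⟨ihnd, ihrest⟩ := walk_master n B A' w hB hA' hA'w
      have hvnot : v ∉ walk B A' n w := by
        intro hc
        rcases walk_mem_partner hB hA' n w v hc with rfl | hp | hp
        · exact hvw rfl
        · rw [hv] at hp; simp at hp
        · rw [hA'v] at hp; simp at hp
      have heq : walk B A n w = walk B A' n w := by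
        cases n with
        | zero => rfl
        | succ m =>
          cases hpw : partner B w with
          | none => rw [walk_succ_none hpw, walk_succ_none hpw]
          | some u =>
            rw [walk_succ_some hpw, walk_succ_some hpw]
            congr 1
            refine walk_congr m A B A' B u fun x hx => ⟨?_, rfl⟩
            have hxmem : x ∈ walk B A' (m+1) w := by
              rw [walk_succ_some hpw]
              exact List.mem_cons_of_mem _ hx
            have hxv : x ≠ v := fun hc => hvnot (hc ▸ hxmem)
            have hxw : x ≠ w := by
              rintro rfl
              rw [walk_succ_some hpw] at ihnd
              exact (List.nodup_cons.mp ihnd).1 hx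
            exact (partner_erase hA hxv hxw).symm
      rw [heq]
      have hnd2 : (v :: walk B A' n w).Nodup := List.nodup_cons.mpr ⟨hvnot, ihnd⟩
      refine ⟨hnd2, fun hlen => ?_⟩
      have hlen' : (walk B A' n w).length ≤ n := by
        simp only [List.length_cons] at hlen
        omega
      obtain ⟨ihclose, ihint⟩ := ihrest hlen'
      obtain ⟨t, ht⟩ := walk_exists_cons B A' n w
      have hpe : pathEdges (v :: walk B A' n w) = s(v, w) :: pathEdges (walk B A' n w) := by
        rw [ht, pathEdges_cons_cons, ← ht]
      constructor
      · rintro x hx y hy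
        rcases List.mem_cons.mp hx with rfl | hx'
        · rcases hy with hy | hy
          · rw [hpv] at hy
            cases hy
            rw [hpe]
            exact List.mem_cons_self
          · rw [hv] at hy; cases hy
        · by_cases hxw : x = w
          · subst hxw
            rcases hy with hy | hy
            · rw [partner_symm hA hpv] at hy
              cases hy
              rw [hpe, Sym2.eq_swap]
              exact List.mem_cons_self
            · rw [hpe]
              exact List.mem_cons_of_mem _ (ihclose x hx' y (Or.inl hy))
          · have hxv : x ≠ v := fun hc => hvnot (hc ▸ hx')
            rw [hpe]
            refine List.mem_cons_of_mem _ ?_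
            rcases hy with hy | hy
            · exact ihclose x hx' y (Or.inr (by rw [partner_erase hA hxv hxw]; exact hy))
            · exact ihclose x hx' y (Or.inl hy)
      · rintro x hx hy
        rcases List.mem_cons.mp hx with rfl | hx'
        · exact Or.inl rfl
        · right
          rw [ht, List.getLast?_cons_cons, ← ht]
          by_cases hxw : x = w
          · subst hxw
            have hpbw : partner B x = none := by
              rcases hy with hy | hy
              · rw [partner_symm hA hpv] at hy; cases hy
              · exact hy
            have : walk B A' n x = [x] := by
              cases n with
              | zero => rfl
              | succ m => exact walk_succ_none hpbw
            rw [this] at hx' ⊢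
            simp
          · have hxv : x ≠ v := fun hc => hvnot (hc ▸ hx')
            have := ihint x hx' (by
              rcases hy with hy | hy
              · exact Or.inr (by rw [partner_erase hA hxv hxw]; exact hy)
              · exact Or.inl hy)
            rcases this with rfl | hlast
            · exact absurd rfl hxw
            · exact hlast


lemma pathEdges_singleton {v : V} : pathEdges [v] = [] := rfl

lemma walk_edge_type : ∀ (n : ℕ) (A B : Finset (Sym2 V)) (v : V) (i : ℕ)
    (h : i < (pathEdges (walk A B n v)).length),
    (pathEdges (walk A B n v))[i] ∈ (if i % 2 = 0 then A else B)
  | 0, A, B, v, i, h => by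
    simp only [walk_zero] at h ⊢
    simp [pathEdges_singleton] at h
  | n+1, A, B, v, i, h => by
    cases hpv : partner A v with
    | none =>
      rw [walk_succ_none hpv] at h
      simp [pathEdges_singleton] at h
    | some w =>
      simp only [walk_succ_some hpv] at h ⊢
      obtain ⟨t, ht⟩ := walk_exists_cons B A n w
      have hpe : pathEdges (v :: walk B A n w) = s(v, w) :: pathEdges (walk B A n w) := by
        rw [ht, pathEdges_cons_cons, ← ht]
      simp only [hpe] at h ⊢
      cases i with
      | zero => simpa using partner_spec hpv
      | succ j =>
        rw [List.getElem_cons_succ]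
        have := walk_edge_type n B A w j (by simpa using h)
        by_cases hj : j % 2 = 0
        · have hj1 : (j + 1) % 2 ≠ 0 := by omega
          rw [if_pos hj] at this
          rw [if_neg hj1]
          exact this
        · have hj1 : (j + 1) % 2 = 0 := by omega
          rw [if_neg hj] at this
          rw [if_pos hj1]
          exact this

lemma walk_chain : ∀ (n : ℕ) (A B : Finset (Sym2 V)) (v : V),
    List.Chain' (fun a b => s(a, b) ∈ A ∪ B) (walk A B n v)
  | 0, A, B, v => by rw [walk_zero]; exact List.isChain_singleton _
  | n+1, A, B, v => by
    cases hpv : partner A v with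
    | none => rw [walk_succ_none hpv]; exact List.isChain_singleton _
    | some w =>
      rw [walk_succ_some hpv]
      rw [List.Chain', List.isChain_cons]
      refine ⟨?_, ?_⟩
      · intro y hy
        obtain ⟨t, ht⟩ := walk_exists_cons B A n w
        rw [ht] at hy
        simp at hy
        subst hy
        exact Finset.mem_union_left _ (partner_spec hpv)
      · exact (walk_chain n B A w).imp fun a b hab => by
          rwa [Finset.union_comm]

lemma walk_last : ∀ (n : ℕ) (A B : Finset (Sym2 V)) (v : V),
    (walk A B n v).length ≤ n → ∀ z, (walk A B n v).getLast? = some z →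
    partner (if (walk A B n v).length % 2 = 0 then B else A) z = none
  | 0, A, B, v, hlen, z, hz => by
    rw [walk_zero] at hlen
    simp at hlen
  | n+1, A, B, v, hlen, z, hz => by
    cases hpv : partner A v with
    | none =>
      rw [walk_succ_none hpv] at hlen hz ⊢
      simp at hz
      subst hz
      simpa using hpv
    | some w =>
      rw [walk_succ_some hpv] at hlen hz ⊢
      obtain ⟨t, ht⟩ := walk_exists_cons B A n w
      have hlen' : (walk B A n w).length ≤ n := by
        simp only [List.length_cons] at hlen
        omega
      have hz' : (walk B A n w).getLast? = some z := by
        rw [ht] at hz ⊢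
        rwa [List.getLast?_cons_cons] at hz
      have := walk_last n B A w hlen' z hz'
      set m := (walk B A n w).length with hm
      simp only [List.length_cons]
      by_cases hm2 : m % 2 = 0
      · have : partner A z = none := by rw [if_pos hm2] at this; exact this
        rw [if_neg (by omega : ¬ (m + 1) % 2 = 0)]
        exact this
      · have : partner B z = none := by rw [if_neg hm2] at this; exact this
        rw [if_pos (by omega : (m + 1) % 2 = 0)]
        exact this

/-- walking back along a chain from a member of a partner-closed list keeps membership -/
lemma chain_closed {A B : Finset (Sym2 V)} (hA : MProps A) (hB : MProps B)
    (m : List V)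
    (hm : ∀ x ∈ m, ∀ y : V, (partner A x = some y ∨ partner B x = some y) → y ∈ m) :
    ∀ l : List V, List.Chain' (fun a b => s(a, b) ∈ A ∪ B) l →
      ∀ z, l.getLast? = some z → z ∈ m → ∀ x ∈ l, x ∈ m
  | [], _, z, hz, _, x, hx => by simp at hx
  | [a], _, z, hz, hzm, x, hx => by
    simp at hz hx
    subst hz; subst hx
    exact hzm
  | a :: b :: l, hchain, z, hz, hzm, x, hx => by
    rw [List.Chain', List.isChain_cons_cons] at hchain
    rw [List.getLast?_cons_cons] at hz
    have hall : ∀ x ∈ b :: l, x ∈ m :=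
      chain_closed hA hB m hm (b :: l) hchain.2 z hz hzm
    rcases List.mem_cons.mp hx with rfl | hx'
    · have hbm : b ∈ m := hall b (List.mem_cons_self)
      rcases Finset.mem_union.mp hchain.1 with hab | hab
      · exact hm b hbm x (Or.inl (partner_eq_some hA (by rwa [Sym2.eq_swap])))
      · exact hm b hbm x (Or.inr (partner_eq_some hB (by rwa [Sym2.eq_swap])))
    · exact hall x hx'

end WalkDev





lemma aug_exists {V : Type*} [DecidableEq V] (G : SimpleGraph V) (N : Finset (Sym2 V))
    (hN : IsMatching G N) (vs : List V) (h : IsAugPath G N vs) :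
    ∃ N' : Finset (Sym2 V), IsMatching G N' ∧ N'.card = N.card + 1 := by
  obtain ⟨hlen2, hnd, heven, hG, halt, hhead, hlast⟩ := h
  set l := pathEdges vs with hl
  have llen : l.length = vs.length - 1 := pathEdges_length vs
  have hne : vs ≠ [] := by rintro rfl; simp at hlen2
  have halt' : ∀ (i : ℕ) (hi : i < l.length), (l[i]'hi ∈ N ↔ Odd i) := by
    intro i hi
    simpa using halt i hi
  set P := l.toFinset with hP
  have hmemP : ∀ e, e ∈ P ↔ ∃ (i : ℕ) (hh : i + 1 < vs.length), e = s(vs[i], vs[i+1]) := by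
    intro e; rw [hP, List.mem_toFinset]; exact pathEdges_mem_iff
  have hgetP : ∀ (i : ℕ) (hh : i + 1 < vs.length), s(vs[i], vs[i+1]) ∈ P := by
    intro i hh; rw [hmemP]; exact ⟨i, hh, rfl⟩
  have hidx : ∀ (i : ℕ) (hh : i + 1 < vs.length), (s(vs[i], vs[i+1]) ∈ N ↔ Odd i) := by
    intro i hh
    have hil : i < l.length := by rw [llen]; omega
    rw [← pathEdges_getElem vs i hil (by omega) hh]
    exact halt' i hil
  have hu0 : Unmatched N (vs[0]'(by omega)) := by
    have := hhead (vs.head hne) (by rw [List.head?_eq_head hne]; rfl)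
    rwa [List.head_eq_getElem] at this
  have hulast : Unmatched N (vs[vs.length - 1]'(by omega)) := by
    have := hlast (vs.getLast hne) (by rw [List.getLast?_eq_getLast hne]; rfl)
    rwa [List.getLast_eq_getElem] at this
  -- interior vertices are matched by a path edge in N ∩ P
  have hint : ∀ (k : ℕ) (hk0 : 0 < k) (hk1 : k + 1 < vs.length),
      ∃ g, g ∈ N ∧ g ∈ P ∧ (vs[k]'(by omega)) ∈ g := by
    intro k hk0 hk1
    by_cases hko : Odd k
    · refine ⟨s(vs[k], vs[k+1]), (hidx k (by omega)).mpr hko, hgetP k (by omega), ?_⟩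
      exact Sym2.mem_mk_left _ _
    · have hk1' : k - 1 + 1 = k := by omega
      refine ⟨s(vs[k-1], vs[k-1+1]), (hidx (k-1) (by omega)).mpr ?_, hgetP (k-1) (by omega), ?_⟩
      · rw [Nat.odd_sub (by omega)]
        simpa using hko
      · simp_rw [hk1']
        exact Sym2.mem_mk_right _ _
  refine ⟨(N \ P) ∪ (P \ N), ⟨?_, ?_⟩, ?_⟩
  · intro e he
    rcases Finset.mem_union.mp he with he | he
    · exact hN.1 e (Finset.mem_sdiff.mp he).1
    · obtain ⟨heP, -⟩ := Finset.mem_sdiff.mp he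
      exact hG e (List.mem_toFinset.mp heP)
  · -- pairwise disjointness
    have mixed : ∀ e ∈ N \ P, ∀ f ∈ P \ N, ∀ v : V, v ∈ e → v ∈ f → False := by
      intro e he f hf v hve hvf
      obtain ⟨heN, heP⟩ := Finset.mem_sdiff.mp he
      obtain ⟨hfP, hfN⟩ := Finset.mem_sdiff.mp hf
      obtain ⟨i, hi, rfl⟩ := (hmemP f).mp hfP
      -- v = vs[k] for k = i or i+1
      have : ∃ (k : ℕ) (hk : k < vs.length), v = vs[k] := by
        rcases Sym2.mem_iff.mp hvf with rfl | rfl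
        · exact ⟨i, by omega, rfl⟩
        · exact ⟨i + 1, by omega, rfl⟩
      obtain ⟨k, hk, rfl⟩ := this
      rcases Nat.eq_zero_or_pos k with rfl | hk0
      · exact hu0 e heN hve
      rcases eq_or_lt_of_le (by omega : k + 1 ≤ vs.length) with hkl | hkl
      · have : k = vs.length - 1 := by omega
        subst this
        exact hulast e heN hve
      obtain ⟨g, hgN, hgP, hvg⟩ := hint k hk0 hkl
      have : e = g := by
        by_contra hc
        exact hN.2 e heN g hgN hc _ hve hvg
      subst this
      exact heP hgP
    intro e he f hf hef v hve hvf
    rcases Finset.mem_union.mp he with he' | he' <;> rcases Finset.mem_union.mp hf with hf' | hf'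
    · exact hN.2 e (Finset.mem_sdiff.mp he').1 f (Finset.mem_sdiff.mp hf').1 hef v hve hvf
    · exact mixed e he' f hf' v hve hvf
    · exact mixed f hf' e he' v hvf hve
    · -- both non-matching path edges
      obtain ⟨hfP, hfN⟩ := Finset.mem_sdiff.mp hf'
      obtain ⟨heP, heN⟩ := Finset.mem_sdiff.mp he'
      obtain ⟨i, hi, rfl⟩ := (hmemP e).mp heP
      obtain ⟨j, hj, rfl⟩ := (hmemP f).mp hfP
      have hij : i ≠ j := by rintro rfl; exact hef rfl
      rcases pathEdges_shared hnd hi hj hij hve hvf with rfl | rfl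
      · rcases Nat.even_or_odd i with hpar | hpar
        · exact hfN ((hidx (i+1) hj).mpr (Even.add_one hpar))
        · exact heN ((hidx i hi).mpr hpar)
      · rcases Nat.even_or_odd j with hpar | hpar
        · exact heN ((hidx (j+1) hi).mpr (Even.add_one hpar))
        · exact hfN ((hidx j hj).mpr hpar)
  · -- cardinality
    have hlnd : l.Nodup := pathEdges_nodup hnd
    have hPcard : P.card = vs.length - 1 := by
      rw [hP, List.toFinset_card_of_nodup hlnd, llen]
    have hfilter : (l.filter (fun e => decide (e ∈ N))).length = l.length / 2 := by
      have := filter_alt_aux l (fun e => decide (e ∈ N)) false (by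
        intro i hi
        simp only [decide_eq_true_eq]
        simpa using halt' i hi)
      simpa using this
    have hPN : (P ∩ N).card = l.length / 2 := by
      rw [← hfilter]
      have h1 : (l.filter (fun e => decide (e ∈ N))).toFinset = P ∩ N := by
        rw [List.toFinset_filter]
        ext x
        simp [hP]
      rw [← h1, List.toFinset_card_of_nodup (hlnd.filter _)]
    have hdisj : Disjoint (N \ P) (P \ N) := disjoint_sdiff_sdiff
    rw [Finset.card_union_of_disjoint hdisj]
    have h1 : (N \ P).card + (N ∩ P).card = N.card := Finset.card_sdiff_add_card_inter N P
    have h2 : (P \ N).card + (P ∩ N).card = P.card := Finset.card_sdiff_add_card_inter P N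
    have h3 : (N ∩ P).card = (P ∩ N).card := by rw [Finset.inter_comm]
    obtain ⟨m, hm⟩ := heven
    have hvl : 2 ≤ vs.length := hlen2
    omega





lemma component_aug {V : Type*} [DecidableEq V] (G : SimpleGraph V)
    (M1 M2 : Finset (Sym2 V)) (h1 : IsMatching G M1) (h2 : IsMatching G M2)
    (vs : List V) (hlen2 : 2 ≤ vs.length) (heven : Even vs.length) (hnd : vs.Nodup)
    (hSD : ∀ (i : ℕ) (hi : i + 1 < vs.length),
      (s(vs[i], vs[i+1]) ∈ M1 ∧ s(vs[i], vs[i+1]) ∉ M2) ∨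
      (s(vs[i], vs[i+1]) ∈ M2 ∧ s(vs[i], vs[i+1]) ∉ M1))
    (hcl : ∀ u ∈ vs, ∀ w : V,
      ((s(u, w) ∈ M1 ∧ s(u, w) ∉ M2) ∨ (s(u, w) ∈ M2 ∧ s(u, w) ∉ M1)) →
      s(u, w) ∈ pathEdges vs)
    (hb : s(vs[0]'(by omega), vs[1]'(by omega)) ∈ M1) :
    IsAugPath G M2 vs := by
  have hne : vs ≠ [] := by rintro rfl; simp at hlen2
  -- distinctness of consecutive path edges
  have hconsec : ∀ (i : ℕ) (hi : i + 2 < vs.length),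
      s(vs[i], vs[i+1]) ≠ s(vs[i+1], vs[i+2]) := by
    intro i hi hcon
    rcases Sym2.eq_iff.mp hcon with ⟨he1, -⟩ | ⟨he1, -⟩ <;>
      exact absurd (nodup_getElem_inj hnd (by omega) (by omega) he1) (by omega)
  -- alternation
  have halt : ∀ (i : ℕ) (hi : i + 2 < vs.length),
      (s(vs[i], vs[i+1]) ∈ M1 ↔ s(vs[i+1], vs[i+2]) ∉ M1) := by
    intro i hi
    have hd := hconsec i hi
    have hmid1 : vs[i+1] ∈ s(vs[i], vs[i+1]) := Sym2.mem_mk_right _ _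
    have hmid2 : vs[i+1] ∈ s(vs[i+1], vs[i+2]) := Sym2.mem_mk_left _ _
    constructor
    · intro hin hin2
      exact h1.2 _ hin _ hin2 hd _ hmid1 hmid2
    · intro hnin
      rcases hSD i (by omega) with ⟨hin, -⟩ | ⟨hin, hno⟩
      · exact hin
      · rcases hSD (i+1) (by omega) with ⟨hin2, -⟩ | ⟨hin2, -⟩
        · exact absurd hin2 hnin
        · exact absurd (h2.2 _ hin _ hin2 hd _ hmid1 hmid2) (by simp)
  -- parity of M1-membership
  have hpar : ∀ (i : ℕ) (hi : i + 1 < vs.length), (s(vs[i], vs[i+1]) ∈ M1 ↔ Even i) := by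
    intro i
    induction i with
    | zero => intro hi; simpa using hb
    | succ n ih =>
      intro hi
      have hn := ih (by omega)
      have ha := halt n (by omega)
      rw [Nat.even_add_one, ← hn]
      exact iff_not_comm.mp ha
  have hM2mem : ∀ (i : ℕ) (hi : i + 1 < vs.length), (s(vs[i], vs[i+1]) ∈ M2 ↔ Odd i) := by
    intro i hi
    rcases hSD i hi with ⟨hin, hno⟩ | ⟨hin, hno⟩
    · exact iff_of_false hno (by
        rw [Nat.not_odd_iff_even]
        exact (hpar i hi).mp hin)
    · refine iff_of_true hin (Nat.not_even_iff_odd.mp fun hc => hno ((hpar i hi).mpr hc))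
  -- endpoints unmatched
  have hlast_idx : vs.length - 2 + 1 = vs.length - 1 := by omega
  have hends : ∀ (k : ℕ) (hk : k < vs.length), (k = 0 ∨ k = vs.length - 1) →
      Unmatched M2 vs[k] := by
    rintro k hk hk01 f hf hvf
    by_cases hfM1 : f ∈ M1
    · -- f shares endpoint with the M1 end-edge
      have hidx : ∃ (j : ℕ) (hj : j + 1 < vs.length), Even j ∧ vs[k] ∈ s(vs[j], vs[j+1]) := by
        rcases hk01 with rfl | rfl
        · exact ⟨0, by omega, Even.zero, Sym2.mem_mk_left _ _⟩
        · refine ⟨vs.length - 2, by omega, ?_, ?_⟩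
          · obtain ⟨m, hm⟩ := heven; refine ⟨m - 1, by omega⟩
          · rw [Sym2.mem_iff]
            right
            congr 1
            omega
      obtain ⟨j, hj, hjev, hmem⟩ := hidx
      have hjM1 : s(vs[j], vs[j+1]) ∈ M1 := (hpar j hj).mpr hjev
      have hne' : f ≠ s(vs[j], vs[j+1]) := by
        rintro rfl
        exact (Nat.not_odd_iff_even.mpr hjev) ((hM2mem j hj).mp hf)
      exact h1.2 f hfM1 _ hjM1 hne' _ hvf hmem
    · -- f is a symmetric-difference edge at the endpoint, so a path edge
      obtain ⟨w, rfl⟩ := Sym2.mem_iff_exists.mp hvf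
      have hpe : s(vs[k], w) ∈ pathEdges vs :=
        hcl vs[k] (List.getElem_mem hk) w (Or.inr ⟨hf, hfM1⟩)
      obtain ⟨j, hj, hje⟩ := pathEdges_mem_iff.mp hpe
      have hvk : vs[k] ∈ s(vs[j], vs[j+1]) := hje ▸ Sym2.mem_mk_left _ _
      have hkj : k = j ∨ k = j + 1 := by
        rcases Sym2.mem_iff.mp hvk with he | he
        · exact Or.inl (nodup_getElem_inj hnd hk (by omega) he)
        · exact Or.inr (nodup_getElem_inj hnd hk (by omega) he)
      have hjev : Even j := by
        rcases hk01 with rfl | rfl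
        · rcases hkj with rfl | h0
          · exact Even.zero
          · omega
        · have : j = vs.length - 2 := by omega
          subst this
          obtain ⟨m, hm⟩ := heven; exact ⟨m - 1, by omega⟩
      exact hfM1 (hje ▸ (hpar j hj).mpr hjev)
  refine ⟨hlen2, hnd, heven, ?_, ?_, ?_, ?_⟩
  · intro e he
    obtain ⟨i, hi, rfl⟩ := pathEdges_mem_iff.mp he
    rcases hSD i hi with ⟨hin, -⟩ | ⟨hin, -⟩
    · exact h1.1 _ hin
    · exact h2.1 _ hin
  · intro i hpi
    have hl := pathEdges_length vs
    have hi : i + 1 < vs.length := by omega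
    have : (pathEdges vs).get ⟨i, hpi⟩ = s(vs[i], vs[i+1]) := by
      simpa using pathEdges_getElem vs i hpi (by omega) hi
    rw [this]
    exact hM2mem i hi
  · intro x hx
    rw [List.head?_eq_head hne] at hx
    have : x = vs[0]'(by omega) := by
      cases hx; exact List.head_eq_getElem hne
    subst this
    exact hends 0 (by omega) (Or.inl rfl)
  · intro x hx
    rw [List.getLast?_eq_getLast hne] at hx
    have : x = vs[vs.length - 1]'(by omega) := by
      cases hx; exact List.getLast_eq_getElem hne
    subst this
    exact hends (vs.length - 1) (by omega) (Or.inr rfl)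


lemma sym2_filter_card {V : Type*} [Fintype V] [DecidableEq V] {e : Sym2 V}
    (he : ¬ e.IsDiag) : (Finset.univ.filter (fun v => v ∈ e)).card = 2 := by
  induction e with
  | _ a b =>
    have hab : a ≠ b := by simpa using he
    have : Finset.univ.filter (fun v => v ∈ s(a, b)) = {a, b} := by
      ext x
      simp [Sym2.mem_iff]
    rw [this, Finset.card_insert_of_notMem (by simpa using hab), Finset.card_singleton]

lemma cover_card {V : Type*} [Fintype V] [DecidableEq V] (G : SimpleGraph V)
    (N : Finset (Sym2 V)) (hN : IsMatching G N) :
    (Finset.univ.filter (fun v => ∃ e ∈ N, v ∈ e)).card = 2 * N.card := by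
  have hbi : Finset.univ.filter (fun v => ∃ e ∈ N, v ∈ e) =
      N.biUnion (fun e => Finset.univ.filter (fun v => v ∈ e)) := by
    ext x
    simp
  rw [hbi, Finset.card_biUnion, Finset.sum_congr rfl
    (fun e he => sym2_filter_card (fun hd => (SimpleGraph.not_isDiag_of_mem_edgeSet G (hN.1 e he)) hd))]
  · simp [mul_comm]
  · intro e he f hf hef
    rw [Function.onFun, Finset.disjoint_left]
    intro v hv hv'
    simp only [Finset.mem_filter] at hv hv'
    exact hN.2 e he f hf hef v hv.2 hv'.2
/-- In the symmetric difference of a maximum matching `M*` with a matching `M`,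
every connected component that is a path with an odd number of edges is an
augmenting path with respect to `M` (up to orientation of the path), and the
number of such components is at least `|M*| − |M|`. -/
theorem stmt2 {V : Type*} [Fintype V] [DecidableEq V] (G : SimpleGraph V)
    (Mstar M : Finset (Sym2 V))
    (hMstar : IsMatching G Mstar)
    (hmax : ∀ M' : Finset (Sym2 V), IsMatching G M' → M'.card ≤ Mstar.card)
    (hM : IsMatching G M)
    (H : SimpleGraph V)
    (hH : H = SimpleGraph.fromEdgeSet ((symmDiff Mstar M : Finset (Sym2 V)) : Set (Sym2 V))) :
    (∀ vs : List V, IsOddPathComponent H vs →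
        IsAugPath G M vs ∨ IsAugPath G M vs.reverse) ∧
    ((Mstar.card : ℤ) - (M.card : ℤ) ≤
      ({s : Finset V | ∃ vs : List V, IsOddPathComponent H vs ∧ vs.toFinset = s}.ncard : ℤ)) := by
  classical
  set A : Finset (Sym2 V) := Mstar \ M with hAdef
  set B : Finset (Sym2 V) := M \ Mstar with hBdef
  have hMstarP : MProps Mstar :=
    ⟨fun e he => SimpleGraph.not_isDiag_of_mem_edgeSet G (hMstar.1 e he), hMstar.2⟩
  have hMP : MProps M :=
    ⟨fun e he => SimpleGraph.not_isDiag_of_mem_edgeSet G (hM.1 e he), hM.2⟩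
  have hA : MProps A := hMstarP.mono (Finset.sdiff_subset)
  have hB : MProps B := hMP.mono (Finset.sdiff_subset)
  have hAdj : ∀ u w : V, H.Adj u w ↔ s(u, w) ∈ A ∪ B := by
    intro u w
    subst hH
    rw [SimpleGraph.fromEdgeSet_adj]
    constructor
    · rintro ⟨hmem, -⟩
      rw [Finset.mem_coe, Finset.mem_symmDiff] at hmem
      rw [Finset.mem_union, hAdef, hBdef, Finset.mem_sdiff, Finset.mem_sdiff]
      exact hmem
    · intro hmem
      have hnd : ¬ (s(u, w) : Sym2 V).IsDiag := by
        rcases Finset.mem_union.mp hmem with h | h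
        · exact hA.1 _ h
        · exact hB.1 _ h
      refine ⟨?_, by simpa using hnd⟩
      rw [Finset.mem_coe, Finset.mem_symmDiff]
      rw [Finset.mem_union, hAdef, hBdef, Finset.mem_sdiff, Finset.mem_sdiff] at hmem
      exact hmem
  -- Part 1
  have part1 : ∀ vs : List V, IsOddPathComponent H vs → IsAugPath G M vs := by
    intro vs hC
    obtain ⟨hlen2, heven, hnd, hchain, hclose, hedge⟩ := hC
    have echain : ∀ (i : ℕ) (hi : i + 1 < vs.length), H.Adj (vs[i]'(by omega)) (vs[i+1]'hi) := by
      intro i hi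
      have := List.isChain_iff_getElem.mp hchain i (by omega)
      simpa using this
    have hSD : ∀ (i : ℕ) (hi : i + 1 < vs.length),
        (s(vs[i]'(by omega), vs[i+1]'hi) ∈ Mstar ∧ s(vs[i]'(by omega), vs[i+1]'hi) ∉ M) ∨
        (s(vs[i]'(by omega), vs[i+1]'hi) ∈ M ∧ s(vs[i]'(by omega), vs[i+1]'hi) ∉ Mstar) := by
      intro i hi
      have := (hAdj _ _).mp (echain i hi)
      rw [Finset.mem_union, hAdef, hBdef, Finset.mem_sdiff, Finset.mem_sdiff] at this
      exact this
    have hcl : ∀ p : Prop, True := fun _ => trivial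
    have hclP : ∀ u ∈ vs, ∀ w : V,
        ((s(u, w) ∈ Mstar ∧ s(u, w) ∉ M) ∨ (s(u, w) ∈ M ∧ s(u, w) ∉ Mstar)) →
        s(u, w) ∈ pathEdges vs := by
      intro u hu w hw
      have hadj : H.Adj u w := by
        rw [hAdj]
        rw [Finset.mem_union, hAdef, hBdef, Finset.mem_sdiff, Finset.mem_sdiff]
        exact hw
      exact hedge u hu w (hclose u hu w hadj) hadj
    by_cases hb : s(vs[0]'(by omega), vs[1]'(by omega)) ∈ Mstar
    · exact component_aug G Mstar M hMstar hM vs hlen2 heven hnd hSD hclP hb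
    · have hb' : s(vs[0]'(by omega), vs[1]'(by omega)) ∈ M := by
        rcases hSD 0 (by omega) with ⟨h1, -⟩ | ⟨h1, -⟩
        · exact absurd h1 hb
        · exact h1
      have haug : IsAugPath G Mstar vs :=
        component_aug G M Mstar hM hMstar vs hlen2 heven hnd
          (fun i hi => (hSD i hi).symm)
          (fun u hu w hw => hclP u hu w hw.symm) hb'
      obtain ⟨N', hN', hcard⟩ := aug_exists G Mstar hMstar vs haug
      have := hmax N' hN'
      omega
  refine ⟨fun vs hC => Or.inl (part1 vs hC), ?_⟩

  -- Part 2
  set n := Fintype.card V with hn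
  have hmemgen : ∀ (M1 M2 : Finset (Sym2 V)), MProps M1 → MProps M2 → ∀ v : V,
      ((partner (M1 \ M2) v).isSome ∧ partner (M2 \ M1) v = none) ↔
      ((∃ e ∈ M1, v ∈ e) ∧ ¬ (∃ e ∈ M2, v ∈ e)) := by
    intro M1 M2 hM1 hM2 v
    have hsub1 : MProps (M1 \ M2) := hM1.mono Finset.sdiff_subset
    constructor
    · rintro ⟨hs, hn0⟩
      obtain ⟨w, hw⟩ := Option.isSome_iff_exists.mp hs
      obtain ⟨h1, h2⟩ := Finset.mem_sdiff.mp (partner_spec hw)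
      refine ⟨⟨_, h1, Sym2.mem_mk_left _ _⟩, ?_⟩
      rintro ⟨f, hf, hvf⟩
      by_cases hfM1 : f ∈ M1
      · have := hM1.eq_of_shared hfM1 h1 hvf (Sym2.mem_mk_left _ _)
        exact h2 (this ▸ hf)
      · obtain ⟨z, rfl⟩ := Sym2.mem_iff_exists.mp hvf
        have : s(v, z) ∈ M2 \ M1 := Finset.mem_sdiff.mpr ⟨hf, hfM1⟩
        rw [partner_eq_some (hM2.mono Finset.sdiff_subset) this] at hn0
        cases hn0
    · rintro ⟨⟨e, he, hve⟩, hnc⟩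
      have heM2 : e ∉ M2 := fun hc => hnc ⟨e, hc, hve⟩
      obtain ⟨w, rfl⟩ := Sym2.mem_iff_exists.mp hve
      refine ⟨by rw [partner_eq_some hsub1 (Finset.mem_sdiff.mpr ⟨he, heM2⟩)]; rfl, ?_⟩
      refine partner_eq_none fun z hz => ?_
      exact hnc ⟨s(v, z), (Finset.mem_sdiff.mp hz).1, Sym2.mem_mk_left _ _⟩
  set cS : Finset V := Finset.univ.filter (fun v => ∃ e ∈ Mstar, v ∈ e) with hcS
  set cM : Finset V := Finset.univ.filter (fun v => ∃ e ∈ M, v ∈ e) with hcM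
  set X : Finset V := cS \ cM with hXdef
  set Y : Finset V := cM \ cS with hYdef
  have hXmem : ∀ v : V, v ∈ X ↔ ((partner A v).isSome ∧ partner B v = none) := by
    intro v
    rw [hXdef, hAdef, hBdef, Finset.mem_sdiff, hcS, hcM]
    simp only [Finset.mem_filter, Finset.mem_univ, true_and]
    exact (hmemgen Mstar M hMstarP hMP v).symm
  have hYmem : ∀ v : V, v ∈ Y ↔ ((partner B v).isSome ∧ partner A v = none) := by
    intro v
    rw [hYdef, hAdef, hBdef, Finset.mem_sdiff, hcS, hcM]
    simp only [Finset.mem_filter, Finset.mem_univ, true_and]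
    exact (hmemgen M Mstar hMP hMstarP v).symm
  -- walk facts
  have hwalk : ∀ v ∈ X, (walk A B n v).Nodup ∧ (walk A B n v).length ≤ n ∧
      (∀ x ∈ walk A B n v, ∀ y : V, (partner A x = some y ∨ partner B x = some y) →
        s(x, y) ∈ pathEdges (walk A B n v)) ∧
      (∀ x ∈ walk A B n v, (partner A x = none ∨ partner B x = none) →
        x = v ∨ (walk A B n v).getLast? = some x) := by
    intro v hv
    obtain ⟨hs, hnone⟩ := (hXmem v).mp hv
    have hmas := walk_master n A B v hA hB hnone
    have hlen : (walk A B n v).length ≤ n := by rw [hn]; exact hmas.1.length_le_card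
    exact ⟨hmas.1, hlen, (hmas.2 hlen).1, (hmas.2 hlen).2⟩
  have hlen2w : ∀ v ∈ X, 2 ≤ (walk A B n v).length := by
    intro v hv
    obtain ⟨hs, -⟩ := (hXmem v).mp hv
    obtain ⟨w, hw⟩ := Option.isSome_iff_exists.mp hs
    have hn1 : 1 ≤ n := by rw [hn]; exact Fintype.card_pos_iff.mpr ⟨v⟩
    obtain ⟨m, hm⟩ : ∃ m, n = m + 1 := ⟨n - 1, by omega⟩
    rw [hm, walk_succ_some hw]
    simp only [List.length_cons]
    have := List.length_pos_iff.mpr (walk_ne_nil B A m w)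
    omega
  set X1 : Finset V := X.filter (fun v => Even (walk A B n v).length) with hX1def
  set X2 : Finset V := X.filter (fun v => ¬ Even (walk A B n v).length) with hX2def
  have hsplit : X1.card + X2.card = X.card := by
    rw [hX1def, hX2def]
    exact Finset.card_filter_add_card_filter_not _
  -- X1 walks are odd path components
  have hcomp : ∀ v ∈ X1, IsOddPathComponent H (walk A B n v) := by
    intro v hv1
    have hv : v ∈ X := (Finset.mem_filter.mp hv1).1
    have hEv : Even (walk A B n v).length := (Finset.mem_filter.mp hv1).2
    obtain ⟨hndw, hlen, hclo, hint⟩ := hwalk v hv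
    have hpart : ∀ u w : V, H.Adj u w → partner A u = some w ∨ partner B u = some w := by
      intro u w hadj
      rcases Finset.mem_union.mp ((hAdj u w).mp hadj) with h | h
      · exact Or.inl (partner_eq_some hA h)
      · exact Or.inr (partner_eq_some hB h)
    refine ⟨hlen2w v hv, hEv, hndw, ?_, ?_, ?_⟩
    · exact (walk_chain n A B v).imp (fun a b hab => (hAdj a b).mpr hab)
    · intro u hu w hadj
      exact pathEdges_vertex_mem (hclo u hu w (hpart u w hadj)) (Sym2.mem_mk_right _ _)
    · intro u hu w hw hadj
      exact hclo u hu w (hpart u w hadj)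
  set T : Finset (Finset V) := X1.image (fun v => (walk A B n v).toFinset) with hT
  have hX1card : X1.card ≤ 2 * T.card := by
    rw [hT]
    refine Finset.card_le_mul_card_image X1 2 ?_
    intro b hb
    obtain ⟨v0, hv0, hv0b⟩ := Finset.mem_image.mp hb
    have hv0X : v0 ∈ X := (Finset.mem_filter.mp hv0).1
    obtain ⟨hnd0, hlen0, hclo0, hint0⟩ := hwalk v0 hv0X
    have hne0 := walk_ne_nil A B n v0
    set z0 := (walk A B n v0).getLast hne0 with hz0
    have hz0' : (walk A B n v0).getLast? = some z0 := List.getLast?_eq_getLast hne0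
    refine le_trans (Finset.card_le_card (?_ : _ ⊆ ({v0, z0} : Finset V))) ?_
    · intro u hu
      obtain ⟨hu1, hub⟩ := Finset.mem_filter.mp hu
      have huX : u ∈ X := (Finset.mem_filter.mp hu1).1
      obtain ⟨hus, hun⟩ := (hXmem u).mp huX
      have humem : u ∈ walk A B n v0 := by
        have h1 : u ∈ (walk A B n u).toFinset := List.mem_toFinset.mpr (mem_walk_self A B n u)
        rw [hub, ← hv0b] at h1
        exact List.mem_toFinset.mp h1
      rcases hint0 u humem (Or.inr hun) with rfl | hlast
      · exact Finset.mem_insert_self _ _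
      · rw [hz0'] at hlast
        have : z0 = u := Option.some_inj.mp hlast
        subst this
        simp
    · refine le_trans (Finset.card_insert_le _ _) ?_
      simp
  -- the last vertex of an odd walk
  have hlastY : ∀ v ∈ X2, ((walk A B n v).getLast (walk_ne_nil A B n v)) ∈ Y ∧
      partner A ((walk A B n v).getLast (walk_ne_nil A B n v)) = none := by
    intro v hv2
    have hv : v ∈ X := (Finset.mem_filter.mp hv2).1
    have hOdd : ¬ Even (walk A B n v).length := (Finset.mem_filter.mp hv2).2
    obtain ⟨hndw, hlen, hclo, hint⟩ := hwalk v hv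
    have hne' := walk_ne_nil A B n v
    have hlast? : (walk A B n v).getLast? = some ((walk A B n v).getLast hne') :=
      List.getLast?_eq_getLast hne'
    have hmod : (walk A B n v).length % 2 = 1 := by
      rw [Nat.even_iff] at hOdd
      omega
    have hterm := walk_last n A B v hlen _ hlast?
    rw [if_neg (by omega)] at hterm
    have hl2 := hlen2w v hv
    set L := walk A B n v with hL
    have hlen3 : 3 ≤ L.length := by omega
    have hpl := pathEdges_length L
    have hedget := walk_edge_type n A B v (L.length - 2) (by rw [← hL, hpl]; omega)
    simp only [← hL] at hedget
    rw [if_neg (by omega : ¬ (L.length - 2) % 2 = 0)] at hedget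
    have hgeq : (pathEdges L)[L.length - 2]'(by omega) =
        s(L[L.length - 2]'(by omega), L[L.length - 2 + 1]'(by omega)) :=
      pathEdges_getElem L (L.length - 2) (by omega) (by omega) (by omega)
    have hidx : L.length - 2 + 1 = L.length - 1 := by omega
    have hlastidx : L[L.length - 2 + 1]'(by omega) = L.getLast hne' := by
      rw [List.getLast_eq_getElem]
      congr 1
    have hBmem : s(L.getLast hne', L[L.length - 2]'(by omega)) ∈ B := by
      rw [Sym2.eq_swap, ← hlastidx, ← hgeq]
      exact hedget
    refine ⟨(hYmem _).mpr ⟨?_, hterm⟩, hterm⟩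
    rw [partner_eq_some hB hBmem]
    rfl
  have hX2card : X2.card ≤ Y.card := by
    refine Finset.card_le_card_of_injOn
      (fun v => (walk A B n v).getLast (walk_ne_nil A B n v)) (fun v hv => (hlastY v hv).1) ?_
    intro u hu v hv heq
    rw [Finset.mem_coe] at hu hv
    have huX : u ∈ X := (Finset.mem_filter.mp hu).1
    have hvX : v ∈ X := (Finset.mem_filter.mp hv).1
    obtain ⟨hndv, hlenv, hclov, hintv⟩ := hwalk v hvX
    have hnu := walk_ne_nil A B n u
    have hnv := walk_ne_nil A B n v
    have hm : ∀ x ∈ walk A B n v, ∀ y : V,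
        (partner A x = some y ∨ partner B x = some y) → y ∈ walk A B n v :=
      fun x hx y hy => pathEdges_vertex_mem (hclov x hx y hy) (Sym2.mem_mk_right _ _)
    have heq' : (walk A B n u).getLast hnu = (walk A B n v).getLast hnv := heq
    have hzmem : (walk A B n u).getLast hnu ∈ walk A B n v := by
      rw [heq']
      exact List.getLast_mem hnv
    have humem : u ∈ walk A B n v :=
      chain_closed hA hB (walk A B n v) hm (walk A B n u) (walk_chain n A B u)
        ((walk A B n u).getLast hnu) (List.getLast?_eq_getLast hnu) hzmem u
        (mem_walk_self A B n u)
    obtain ⟨hus, hun⟩ := (hXmem u).mp huX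
    rcases hintv u humem (Or.inr hun) with h | hlast
    · exact h
    · exfalso
      rw [List.getLast?_eq_getLast hnv] at hlast
      have hul : u = (walk A B n v).getLast hnv := (Option.some_inj.mp hlast).symm
      have hAnone := (hlastY v hv).2
      rw [← hul] at hAnone
      rw [hAnone] at hus
      cases hus
  have hSfin : Set.Finite {s : Finset V | ∃ vs : List V, IsOddPathComponent H vs ∧ vs.toFinset = s} :=
    Set.toFinite _
  have hTcard : T.card ≤ {s : Finset V | ∃ vs : List V, IsOddPathComponent H vs ∧ vs.toFinset = s}.ncard := by
    rw [Set.ncard_eq_toFinset_card _ hSfin]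
    refine Finset.card_le_card ?_
    intro b hbT
    obtain ⟨v, hv, rfl⟩ := Finset.mem_image.mp (by rwa [hT] at hbT)
    rw [Set.Finite.mem_toFinset]
    exact ⟨walk A B n v, hcomp v hv, rfl⟩
  have hcScard : cS.card = 2 * Mstar.card := by rw [hcS]; exact cover_card G Mstar hMstar
  have hcMcard : cM.card = 2 * M.card := by rw [hcM]; exact cover_card G M hM
  have h1 : X.card + (cS ∩ cM).card = cS.card := by
    rw [hXdef]; exact Finset.card_sdiff_add_card_inter cS cM
  have h2 : Y.card + (cM ∩ cS).card = cM.card := by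
    rw [hYdef]; exact Finset.card_sdiff_add_card_inter cM cS
  have h3 : (cS ∩ cM).card = (cM ∩ cS).card := by rw [Finset.inter_comm]
  omega
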